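/- arXiv:math/0407179 — 2 statements merged into one kernel-verified Lean document; each statement's English description precedes it below -/
import Mathlib

section
/- For coprime positive integers p and q, the generalized Dedekind sums satisfy the reciprocity law s(p,q,1) + s(q,p,1) = -1/4 + (p² + q² + 1)/(12 p q). -/
/-!
Sum the addition formula `cot x * cot y = 1 + cot (x + y) * (cot x + cot y)` over
`x = k π / p`, `y = l π / q` with `0 < k < p`, `0 < l < q`; coprimality keeps every `x + y` off
`π ℤ`. The left side vanishes because `∑ k, cot (k π / p) = 0`. On the right, the multiplication
formula `∑ l < q, cot (θ + l π / q) = q cot (q θ)`, a logarithmic derivative of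
`X ^ q - u ^ q = ∏ l, (X - ζ ^ l u)`, turns the inner sums into Dedekind sums:
`4pq (s(p,q) + s(q,p)) = 4p s(p,1) + 4q s(q,1) - (p - 1)(q - 1)`, where `s(a,b) = dsum a b 1`.
For the pair `(n, n + 1)` one has `s(n, n+1) = s(n,1)` and `s(n+1, n) = -s(n+1,1)`, so this
relation is a recursion giving `s(n,1) = (n - 1)(n - 2) / (12 n)`, and the reciprocity law follows.
-/

open Finset Real

/-- Generalized Dedekind cotangent sum s(α,β,γ). -/
noncomputable def dsum (a : ℕ) (b c : ℤ) : ℝ :=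
  (1 / (4 * (a : ℝ))) *
    ∑ k ∈ Finset.Ico 1 a,
      Real.cot ((k : ℝ) * (b : ℝ) * Real.pi / (a : ℝ)) *
      Real.cot ((k : ℝ) * (c : ℝ) * Real.pi / (a : ℝ))

open Polynomial in
theorem IsPrimitiveRoot.sum_one_div_sub_pow_mul {K : Type*} [Field K] {ζ : K} {n : ℕ}
    (hζ : IsPrimitiveRoot ζ n) {x α : K} (h : x ^ n ≠ α ^ n) :
    ∑ l ∈ range n, 1 / (x - ζ ^ l * α) = n * x ^ (n - 1) / (x ^ n - α ^ n) := by
  have hsplit := X_pow_sub_C_splits_of_isPrimitiveRoot hζ (rfl : α ^ n = α ^ n)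
  have := hsplit.eval_derivative_div_eval_of_ne_zero (x := x) (by simpa [sub_eq_zero] using h)
  rw [← nthRoots, hζ.nthRoots_eq rfl, derivative_sub, derivative_C, derivative_X_pow] at this
  simpa [Multiset.map_map, Finset.sum] using this.symm

namespace Complex

theorem exp_two_mul_I_mul_ne_one {z : ℂ} (hz : sin z ≠ 0) : exp (2 * I * z) ≠ 1 := by
  rw [Ne, exp_eq_one_iff]
  rintro ⟨m, hm⟩
  apply hz
  rw [sin_eq_zero_iff]
  exact ⟨m, mul_left_cancel₀ (by simp : (2 * I : ℂ) ≠ 0) (by rw [hm]; ring)⟩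

theorem cot_eq_I_sub_div {z : ℂ} (hz : exp (2 * I * z) ≠ 1) :
    cot z = I - 2 * I * (1 / (1 - exp (2 * I * z))) := by
  have : 1 - exp (2 * I * z) ≠ 0 := sub_ne_zero.2 hz.symm
  rw [cot_eq_exp_ratio]
  field_simp
  ring_nf
  rw [I_sq]
  ring

theorem sum_cot_add_pi_div {n : ℕ} {z : ℂ} (h : sin (n * z) ≠ 0) :
    ∑ l ∈ range n, cot (z + l * π / n) = n * cot (n * z) := by
  have hn : n ≠ 0 := by rintro rfl; simp at h
  set w := exp (2 * I * z)
  have hζ : IsPrimitiveRoot (exp (2 * π * I / n)) n := isPrimitiveRoot_exp n hn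
  have hw : w ^ n = exp (2 * I * (n * z)) := by
    rw [← exp_nat_mul]; ring_nf
  have hwn : w ^ n ≠ 1 := hw ▸ exp_two_mul_I_mul_ne_one h
  have hterm : ∀ l : ℕ, exp (2 * I * (z + l * π / n)) = exp (2 * π * I / n) ^ l * w := by
    intro l
    rw [← exp_nat_mul, ← exp_add]
    field_simp
    ring_nf
  have hsum := hζ.sum_one_div_sub_pow_mul (x := 1) (α := w) (by simpa using hwn.symm)
  have hne : ∀ l : ℕ, exp (2 * I * (z + l * π / n)) ≠ 1 := by
    intro l h1
    apply hwn
    rw [← one_pow n, ← h1, hterm, mul_pow, ← pow_mul, mul_comm l, pow_mul, hζ.pow_eq_one,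
      one_pow, one_mul]
  simp_rw [cot_eq_I_sub_div (hne _), hterm, sum_sub_distrib, ← mul_sum, hsum,
    cot_eq_I_sub_div (hw ▸ hwn), ← hw]
  simp only [sum_const, card_range, nsmul_eq_mul, one_pow, mul_one]
  ring

end Complex

namespace Real

theorem sum_cot_add_pi_div {n : ℕ} {θ : ℝ} (h : sin (n * θ) ≠ 0) :
    ∑ l ∈ range n, cot (θ + l * π / n) = n * cot (n * θ) := by
  apply Complex.ofReal_injective
  push_cast [Complex.ofReal_cot]
  exact Complex.sum_cot_add_pi_div (by exact_mod_cast h)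

theorem cot_add_int_mul_pi (x : ℝ) (n : ℤ) : cot (x + n * π) = cot x := by
  rw [← tan_inv_eq_cot, ← tan_inv_eq_cot, tan_add_int_mul_pi]

theorem cot_neg (x : ℝ) : cot (-x) = -cot x := by
  rw [← tan_inv_eq_cot, ← tan_inv_eq_cot, tan_neg, inv_neg]

theorem cot_pi_sub (x : ℝ) : cot (π - x) = -cot x := by
  simpa [neg_add_eq_sub, cot_neg] using cot_add_int_mul_pi (-x) 1

theorem cot_mul_cot {x y : ℝ} (hx : sin x ≠ 0) (hy : sin y ≠ 0) (hxy : sin (x + y) ≠ 0) :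
    cot x * cot y = 1 + cot (x + y) * (cot x + cot y) := by
  simp only [cot_eq_cos_div_sin]
  field_simp
  rw [sin_add, cos_add]
  ring

theorem sin_natCast_mul_pi_div_ne_zero {m n : ℕ} (hn : n ≠ 0) (hmn : ¬ n ∣ m) :
    sin (m * π / n) ≠ 0 := by
  rw [Ne, sin_eq_zero_iff]
  rintro ⟨j, hj⟩
  apply hmn
  have : (j : ℝ) * n = m := by field_simp at hj; exact hj
  exact Int.natCast_dvd_natCast.1 ⟨j, by exact_mod_cast this.symm.trans (mul_comm _ _)⟩

theorem sum_cot_mul_pi_div_eq_zero (n : ℕ) : ∑ k ∈ Ico 1 n, cot (k * π / n) = 0 := by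
  have hreflect := sum_Ico_reflect (fun k : ℕ ↦ cot (k * π / n)) 1 (Nat.le_succ n)
  rw [Nat.add_sub_cancel, Nat.add_sub_cancel_left] at hreflect
  have hodd : ∑ k ∈ Ico 1 n, cot ((n - k : ℕ) * π / n) = -∑ k ∈ Ico 1 n, cot (k * π / n) := by
    rw [← sum_neg_distrib]
    refine sum_congr rfl fun k hk ↦ ?_
    have hn : (n : ℝ) ≠ 0 := by exact_mod_cast (Nat.zero_lt_of_lt (mem_Ico.1 hk).2).ne'
    rw [Nat.cast_sub (mem_Ico.1 hk).2.le, ← cot_pi_sub]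
    congr 1
    field_simp
  linarith

end Real

theorem dsum_add_self (a : ℕ) (b c : ℤ) : dsum a (b + a) c = dsum a b c := by
  unfold dsum
  congr 1
  refine sum_congr rfl fun k hk ↦ ?_
  have ha : (a : ℝ) ≠ 0 := by exact_mod_cast (Nat.zero_lt_of_lt (mem_Ico.1 hk).2).ne'
  have : (k : ℝ) * ((b + a : ℤ) : ℝ) * π / a = k * b * π / a + (k : ℤ) * π := by
    push_cast
    field_simp
  rw [this, cot_add_int_mul_pi]

theorem dsum_neg (a : ℕ) (b c : ℤ) : dsum a (-b) c = -dsum a b c := by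
  unfold dsum
  rw [← mul_neg, ← sum_neg_distrib]
  congr 1
  refine sum_congr rfl fun k _ ↦ ?_
  rw [Int.cast_neg, mul_neg, neg_mul, neg_div, cot_neg, neg_mul]

theorem Nat.Coprime.not_dvd_mul_of_mem_Ico {p q k : ℕ} (hpq : p.Coprime q) (hk : k ∈ Ico 1 p) :
    ¬ p ∣ k * q :=
  fun h ↦ Nat.not_dvd_of_pos_of_lt (mem_Ico.1 hk).1 (mem_Ico.1 hk).2 (hpq.dvd_of_dvd_mul_right h)

theorem sum_cot_add_pi_div_of_coprime {p q k : ℕ} (hpq : p.Coprime q) (hk : k ∈ Ico 1 p) :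
    ∑ l ∈ Ico 1 q, cot (k * π / p + l * π / q) = q * cot (k * q * π / p) - cot (k * π / p) := by
  have harg : q * (k * π / p) = k * q * π / p := by ring
  have hsin : sin (q * (k * π / p)) ≠ 0 := by
    rw [harg]
    exact_mod_cast sin_natCast_mul_pi_div_ne_zero (Nat.zero_lt_of_lt (mem_Ico.1 hk).2).ne'
      (hpq.not_dvd_mul_of_mem_Ico hk)
  have hq : 0 < q := Nat.pos_of_ne_zero (by rintro rfl; simp at hsin)
  have hmul := sum_cot_add_pi_div hsin
  rw [range_eq_Ico, sum_eq_sum_Ico_succ_bot hq, harg] at hmul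
  simp only [CharP.cast_eq_zero, zero_mul, zero_div, add_zero] at hmul
  linarith

theorem sum_sum_cot_add_mul_cot {p q : ℕ} (hpq : p.Coprime q) :
    ∑ k ∈ Ico 1 p, ∑ l ∈ Ico 1 q, cot (k * π / p + l * π / q) * cot (k * π / p) =
      4 * p * q * dsum p q 1 - 4 * p * dsum p 1 1 := by
  calc _ = ∑ k ∈ Ico 1 p, (q * cot (k * q * π / p) - cot (k * π / p)) * cot (k * π / p) :=
        sum_congr rfl fun k hk ↦ by rw [← sum_mul, sum_cot_add_pi_div_of_coprime hpq hk]
    _ = _ := by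
      rw [dsum, dsum, ← mul_assoc, ← mul_assoc, mul_sum, mul_sum, ← sum_sub_distrib]
      refine sum_congr rfl fun k hk ↦ ?_
      have hp : (p : ℝ) ≠ 0 := by exact_mod_cast (Nat.zero_lt_of_lt (mem_Ico.1 hk).2).ne'
      push_cast
      field_simp

theorem dsum_add_dsum_of_coprime {p q : ℕ} (hp : 0 < p) (hq : 0 < q) (hpq : p.Coprime q) :
    4 * p * q * (dsum p q 1 + dsum q p 1) =
      4 * p * dsum p 1 1 + 4 * q * dsum q 1 1 - (p - 1) * (q - 1) := by
  have hsin {n : ℕ} (hn : 0 < n) {k : ℕ} (hk : k ∈ Ico 1 n) : sin (k * π / n) ≠ 0 :=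
    sin_natCast_mul_pi_div_ne_zero hn.ne'
      (Nat.not_dvd_of_pos_of_lt (mem_Ico.1 hk).1 (mem_Ico.1 hk).2)
  have hsin_add {k l : ℕ} (hk : k ∈ Ico 1 p) : sin (k * π / p + l * π / q) ≠ 0 := by
    have : k * π / p + l * π / q = ((k * q + l * p : ℕ) : ℝ) * π / (p * q : ℕ) := by
      push_cast
      field_simp
    rw [this]
    refine sin_natCast_mul_pi_div_ne_zero (by positivity) fun h ↦ ?_
    exact hpq.not_dvd_mul_of_mem_Ico hk
      ((Nat.dvd_add_left (dvd_mul_left p l)).1 ((dvd_mul_right p q).trans h))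
  have hexpand : (∑ k ∈ Ico 1 p, cot (k * π / p)) * ∑ l ∈ Ico 1 q, cot (l * π / q) =
      (p - 1) * (q - 1) +
        ∑ k ∈ Ico 1 p, ∑ l ∈ Ico 1 q, cot (k * π / p + l * π / q) * cot (k * π / p) +
        ∑ l ∈ Ico 1 q, ∑ k ∈ Ico 1 p, cot (l * π / q + k * π / p) * cot (l * π / q) := by
    have hcard : ((p : ℝ) - 1) * (q - 1) = ∑ k ∈ Ico 1 p, ∑ l ∈ Ico 1 q, (1 : ℝ) := by
      simp [Nat.cast_sub hp, Nat.cast_sub hq]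
      ring
    rw [sum_mul_sum, sum_comm (s := Ico 1 q), hcard, ← sum_add_distrib, ← sum_add_distrib]
    refine sum_congr rfl fun k hk ↦ ?_
    rw [← sum_add_distrib, ← sum_add_distrib]
    refine sum_congr rfl fun l hl ↦ ?_
    rw [cot_mul_cot (hsin hp hk) (hsin hq hl) (hsin_add hk), add_comm (l * π / q)]
    ring
  rw [sum_cot_mul_pi_div_eq_zero, zero_mul, sum_sum_cot_add_mul_cot hpq,
    sum_sum_cot_add_mul_cot hpq.symm] at hexpand
  linear_combination -hexpand

theorem dsum_one_one {n : ℕ} (hn : 0 < n) : dsum n 1 1 = (n - 1) * (n - 2) / (12 * n) := by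
  induction n, hn using Nat.le_induction with
  | base => simp [dsum]
  | succ n hn ih =>
    have key := dsum_add_dsum_of_coprime hn n.succ_pos
      (Nat.coprime_self_add_right.2 (Nat.coprime_one_right n))
    have h1 : dsum n (n + 1 : ℕ) 1 = dsum n 1 1 := by
      rw [show ((n + 1 : ℕ) : ℤ) = 1 + n by push_cast; ring, dsum_add_self]
    have h2 : dsum (n + 1) n 1 = -dsum (n + 1) 1 1 := by
      rw [show (n : ℤ) = -1 + ((n + 1 : ℕ) : ℤ) by push_cast; ring, dsum_add_self, dsum_neg]
    rw [h1, h2, ih] at key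
    have : (n : ℝ) ≠ 0 := by positivity
    push_cast at key ⊢
    field_simp at key
    rw [eq_div_iff (by positivity)]
    apply mul_left_cancel₀ (show (4 * (n + 1) : ℝ) ≠ 0 by positivity)
    linear_combination -key

theorem dsum_reciprocity (p q : ℕ) (hp : 1 ≤ p) (hq : 1 ≤ q)
    (hpq : Nat.Coprime p q) :
    dsum p q 1 + dsum q p 1 =
      -1 / 4 + ((p : ℝ) ^ 2 + (q : ℝ) ^ 2 + 1) / (12 * (p : ℝ) * (q : ℝ)) := by
  have key := dsum_add_dsum_of_coprime hp hq hpq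
  rw [dsum_one_one hp, dsum_one_one hq] at key
  have : (p : ℝ) ≠ 0 := by positivity
  have : (q : ℝ) ≠ 0 := by positivity
  field_simp at key ⊢
  linear_combination key
end

section
/- For any positive integer p and integer q coprime to p, the cotangent sum (1/(4p)) ∑_{k=1}^{p-1} cot(kqπ/p) cot(kπ/p) is a rational number. -/
/-!
With `ω = exp (2πi/p)` and `p ∤ k`, the number `z = ω^(kb)` is a nontrivial `p`-th root of unity,
and `(z - 1) · ∑_{j<p} j z^j = p`. Since `cot θ = i (z + 1)/(z - 1)` for `z = exp (2iθ)`, this makes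
`p · cot (kbπ/p)` equal to `i` times an integer polynomial in `ω^k`, so `p²` times the cotangent sum
is `∑_{k=1}^{p-1} P(ω^k)` for some `P ∈ ℤ[X]`. Completed by the term `k = 0`, this is an integer,
because `∑_{k<p} ω^(ki)` is `p` or `0`.
-/

open Finset Real

open Polynomial Complex

theorem IsPrimitiveRoot.sum_range_pow_pow {K : Type*} [CommRing K] [IsDomain K] {ζ : K} {n : ℕ}
    (h : IsPrimitiveRoot ζ n) (i : ℕ) :
    ∑ k ∈ range n, (ζ ^ k) ^ i = if n ∣ i then (n : K) else 0 := by
  simp_rw [← pow_mul, mul_comm _ i, pow_mul]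
  split_ifs with hi
  · simp [(h.pow_eq_one_iff_dvd i).mpr hi]
  · have hne : ζ ^ i - 1 ≠ 0 := sub_ne_zero.mpr fun h1 => hi ((h.pow_eq_one_iff_dvd i).mp h1)
    have hgeom := geom_sum_mul (ζ ^ i) n
    rw [pow_right_comm, h.pow_eq_one, one_pow, sub_self] at hgeom
    exact (mul_eq_zero.mp hgeom).resolve_right hne

theorem IsPrimitiveRoot.exists_sum_range_aeval_pow_eq_algebraMap {R K : Type*} [CommRing R]
    [CommRing K] [IsDomain K] [Algebra R K] {ζ : K} {n : ℕ} (h : IsPrimitiveRoot ζ n)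
    (P : R[X]) : ∃ r : R, ∑ k ∈ range n, aeval (ζ ^ k) P = algebraMap R K r := by
  refine ⟨∑ i ∈ range (P.natDegree + 1), if n ∣ i then n • P.coeff i else 0, ?_⟩
  calc ∑ k ∈ range n, aeval (ζ ^ k) P
      = ∑ i ∈ range (P.natDegree + 1), P.coeff i • ∑ k ∈ range n, (ζ ^ k) ^ i := by
        simp_rw [aeval_eq_sum_range, smul_sum]; exact sum_comm
    _ = _ := by
        simp only [h.sum_range_pow_pow, map_sum, apply_ite (algebraMap R K), map_nsmul, map_zero]
        refine sum_congr rfl fun i _ => ?_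
        split_ifs <;> simp [Algebra.smul_def, mul_comm]

theorem sub_one_mul_sum_range_natCast_mul_pow {R : Type*} [CommRing R] (z : R) (n : ℕ) :
    (z - 1) * ∑ j ∈ range n, (j : R) * z ^ j =
      ((n : R) - 1) * z ^ n - ∑ j ∈ range n, z ^ j + 1 := by
  induction n with
  | zero => simp
  | succ n ih =>
    rw [sum_range_succ, sum_range_succ (fun j => z ^ j), mul_add, ih]
    push_cast
    ring

theorem sub_one_mul_sum_range_natCast_mul_pow_of_pow_eq_one {R : Type*} [CommRing R]
    [IsDomain R] {z : R} {n : ℕ} (hz : z ≠ 1) (hzn : z ^ n = 1) :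
    (z - 1) * ∑ j ∈ range n, (j : R) * z ^ j = n := by
  have hgeom : ∑ j ∈ range n, z ^ j = 0 := by
    have := geom_sum_mul z n
    rw [hzn, sub_self] at this
    exact (mul_eq_zero.mp this).resolve_right (sub_ne_zero.mpr hz)
  rw [sub_one_mul_sum_range_natCast_mul_pow, hzn, hgeom]
  ring

theorem Complex.natCast_mul_cot_eq {θ : ℂ} {n : ℕ} (h1 : cexp (2 * I * θ) ≠ 1)
    (hn : cexp (2 * I * θ) ^ n = 1) :
    (n : ℂ) * cot θ =
      I * ((cexp (2 * I * θ) + 1) * ∑ j ∈ range n, (j : ℂ) * cexp (2 * I * θ) ^ j) := by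
  set z := cexp (2 * I * θ) with hz
  have hcot : cot θ * (z - 1) = I * (z + 1) := by
    have : 1 - z ≠ 0 := sub_ne_zero.mpr (Ne.symm h1)
    rw [cot_eq_exp_ratio, ← hz]
    field_simp
    linear_combination (-(z + 1) * (1 - z)) * I_sq
  rw [← sub_one_mul_sum_range_natCast_mul_pow_of_pow_eq_one h1 hn]
  linear_combination (∑ j ∈ range n, (j : ℂ) * z ^ j) * hcot

/-- For a nontrivial `n`-th root of unity `z = exp (2 i θ)`, `n cot θ = i · cotPoly n (z)`. -/
noncomputable def cotPoly (n : ℕ) : ℤ[X] := (X + 1) * ∑ j ∈ range n, (j : ℤ[X]) * X ^ j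

theorem natCast_mul_cot_eq_aeval_cotPoly {p k : ℕ} (hp : p ≠ 0) {b : ℤ}
    (hkb : ¬ (p : ℤ) ∣ k * b) :
    (p : ℂ) * (Real.cot (k * b * π / p) : ℂ) =
      I * aeval (cexp (2 * π * I / p) ^ k) ((cotPoly p).comp (X ^ (b % p).toNat)) := by
  have hω := Complex.isPrimitiveRoot_exp p hp
  set ω := cexp (2 * π * I / p)
  have hk : (ω ^ k) ^ p = 1 := by rw [pow_right_comm, hω.pow_eq_one, one_pow]
  have hexp : cexp (2 * I * (k * b * π / p : ℝ)) = ω ^ ((k : ℤ) * b) := by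
    rw [← Complex.exp_int_mul]
    congr 1
    push_cast
    ring
  have hemod : ω ^ ((k : ℤ) * b) = (ω ^ k) ^ (b % p).toNat := by
    rw [zpow_mul, zpow_natCast]
    conv_lhs => rw [← Int.emod_add_mul_ediv b p]
    rw [zpow_add₀ (by simp [ω]), zpow_mul, zpow_natCast, hk, one_zpow, mul_one,
      ← zpow_natCast (ω ^ k), Int.toNat_of_nonneg (Int.emod_nonneg _ (mod_cast hp))]
  have hne : ω ^ ((k : ℤ) * b) ≠ 1 := mt (hω.zpow_eq_one_iff_dvd _).mp hkb
  rw [Complex.ofReal_cot, natCast_mul_cot_eq (hexp ▸ hne)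
    (by rw [hexp, hemod, pow_right_comm, hk, one_pow]), hexp, hemod]
  simp [cotPoly]

theorem exists_int_eq_sq_mul_sum_cot_mul_cot {p : ℕ} (hp : p ≠ 0) {b c : ℤ}
    (hb : IsCoprime b p) (hc : IsCoprime c p) :
    ∃ N : ℤ,
      (p : ℝ) ^ 2 * ∑ k ∈ Ico 1 p, Real.cot (k * b * π / p) * Real.cot (k * c * π / p) = N := by
  have not_dvd : ∀ {a : ℤ}, IsCoprime a p → ∀ k ∈ Ico 1 p, ¬ (p : ℤ) ∣ k * a := by
    intro a ha k hk hdvd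
    have hk' := mem_Ico.mp hk
    have := Int.le_of_dvd (by omega) (ha.symm.dvd_of_dvd_mul_right hdvd)
    omega
  set P : ℤ[X] := -((cotPoly p).comp (X ^ (b % p).toNat) * (cotPoly p).comp (X ^ (c % p).toNat))
  set ω := cexp (2 * π * I / p)
  have hterm : ∀ k ∈ Ico 1 p,
      (p : ℂ) ^ 2 * (Real.cot (k * b * π / p) * Real.cot (k * c * π / p) : ℝ) =
        aeval (ω ^ k) P := by
    intro k hk
    have hB := natCast_mul_cot_eq_aeval_cotPoly hp (not_dvd hb k hk)
    have hC := natCast_mul_cot_eq_aeval_cotPoly hp (not_dvd hc k hk)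
    set A := aeval (ω ^ k) ((cotPoly p).comp (X ^ (b % p).toNat))
    set B := aeval (ω ^ k) ((cotPoly p).comp (X ^ (c % p).toNat))
    rw [Complex.ofReal_mul, aeval_neg, aeval_mul]
    linear_combination (p * (Real.cot (k * c * π / p) : ℂ)) * hB + (I * A) * hC + (A * B) * I_sq
  obtain ⟨r, hr⟩ := (Complex.isPrimitiveRoot_exp p hp).exists_sum_range_aeval_pow_eq_algebraMap P
  refine ⟨r - P.eval 1, Complex.ofReal_injective ?_⟩
  calc _ = ∑ k ∈ Ico 1 p, aeval (ω ^ k) P := by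
        rw [Complex.ofReal_mul, Complex.ofReal_pow, Complex.ofReal_natCast, Complex.ofReal_sum,
          mul_sum]
        exact sum_congr rfl hterm
    _ = ∑ k ∈ range p, aeval (ω ^ k) P - aeval 1 P := by
        rw [sum_range_eq_add_Ico _ (Nat.pos_of_ne_zero hp)]
        simp
    _ = _ := by
        rw [hr, aeval_def, eval₂_at_one]
        simp

theorem dsum_rational (p : ℕ) (hp : 1 ≤ p) (q : ℤ) (hq : IsCoprime q (p : ℤ)) :
    ∃ r : ℚ, dsum p q 1 = r := by
  obtain ⟨N, hN⟩ := exists_int_eq_sq_mul_sum_cot_mul_cot (by omega) hq isCoprime_one_left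
  refine ⟨N / (4 * p ^ 3), ?_⟩
  have hp0 : (p : ℝ) ≠ 0 := by positivity
  rw [dsum, ← mul_div_cancel_left₀ (∑ k ∈ Ico 1 p, _) (pow_ne_zero 2 hp0), hN]
  push_cast
  field_simp
end
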